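/- Suppose each H_m is a nonzero finite-dimensional complex Hilbert space, (C_j) is an asymptotic expansion for T, and there are n ∈ ℕ and a constant C ≥ 0 with dim H_m ≤ C·m^n for all m ≥ 1. Suppose further there are ℂ-linear functionals τ_j : A → ℂ (j ∈ ℕ) such that for every a ∈ A and every N ∈ ℕ there is a constant K ≥ 0 with |Tr(T^(m)(a)) − m^n·∑_{j=0}^{N−1} m^{−j} τ_j(a)| ≤ K·m^{n−N} for all m ≥ 1, where Tr denotes the operator trace on H_m. Then the formal trace is cyclic: for every k ∈ ℕ and all f, g ∈ A, ∑_{l=0}^{k} τ_l(C_{k−l}(f,g)) = ∑_{l=0}^{k} τ_l(C_{k−l}(g,f)); equivalently the ℂ[[ν]]-linear functional Tr(f) := ν^{−n} ∑_{j≥0} ν^j τ_j(f) satisfies Tr(f ⋆ g) = Tr(g ⋆ f). -/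

import Mathlib

open Filter Finset MeasureTheory

variable {X : Type*} [TopologicalSpace X] [CompactSpace X]
variable {H : ℕ → Type*} [∀ m, NormedAddCommGroup (H m)]
  [∀ m, InnerProductSpace ℂ (H m)] [∀ m, CompleteSpace (H m)]

/-- `T` satisfies the norm-limit property if `‖T^(m)(f)‖ → ‖f‖_∞` for every `f ∈ C(X, ℂ)`. -/
def NormLimitProperty (T : ∀ m : ℕ, C(X, ℂ) →ₗ[ℂ] (H m →L[ℂ] H m)) : Prop :=
  ∀ f : C(X, ℂ), Tendsto (fun m : ℕ => ‖T m f‖) atTop (nhds ‖f‖)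

/-- A family of ℂ-bilinear maps `C_j` is an asymptotic expansion for `T` if for all
`f, g` and every `N` there is `K ≥ 0` with
`‖T^(m)(f)·T^(m)(g) − ∑_{j<N} m^{−j} T^(m)(C_j(f,g))‖ ≤ K·m^{−N}` for all `m ≥ 1`. -/
def IsAsymptoticExpansion (T : ∀ m : ℕ, C(X, ℂ) →ₗ[ℂ] (H m →L[ℂ] H m))
    (C : ℕ → C(X, ℂ) →ₗ[ℂ] C(X, ℂ) →ₗ[ℂ] C(X, ℂ)) : Prop :=
  ∀ (f g : C(X, ℂ)) (N : ℕ), ∃ K : ℝ, 0 ≤ K ∧ ∀ m : ℕ, 1 ≤ m →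
    ‖T m f * T m g - ∑ j ∈ Finset.range N, ((m : ℂ)⁻¹) ^ j • T m (C j f g)‖
      ≤ K * ((m : ℝ)⁻¹) ^ N
/-!
After normalising by `m⁻ⁿ`, the trace hypothesis says that `m⁻ⁿ Tr T⁽ᵐ⁾(a)` has the expansion
`∑ⱼ τⱼ(a) m⁻ʲ`. Since `|Tr A| ≤ dim H_m ‖A‖ = O(mⁿ) ‖A‖`, the expansion of `T⁽ᵐ⁾(f) T⁽ᵐ⁾(g)` in
operator norm survives taking normalised traces, and substituting the expansions of the traces of
the `T⁽ᵐ⁾(C_j(f,g))` gives `m⁻ⁿ Tr(T⁽ᵐ⁾(f) T⁽ᵐ⁾(g)) ~ ∑ₖ m⁻ᵏ ∑_{l ≤ k} τ_l(C_{k-l}(f,g))`.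
The left side is symmetric in `f, g` because the trace is cyclic, and the coefficients of an
expansion in powers of `m⁻¹` are unique.
-/

open Asymptotics

theorem Finset.sum_range_diag_flip' {M : Type*} [AddCommMonoid M] (F : ℕ → ℕ → M) (N : ℕ) :
    ∑ j ∈ range N, ∑ l ∈ range (N - j), F j l
      = ∑ k ∈ range N, ∑ l ∈ range (k + 1), F (k - l) l := by
  rw [← sum_range_diag_flip]
  refine sum_congr rfl fun k _ => ?_
  rw [← sum_range_reflect]
  refine sum_congr rfl fun l hl => ?_
  rw [Nat.add_sub_cancel, Nat.sub_sub_self (Nat.le_of_lt_succ (mem_range.1 hl))]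

theorem ContinuousLinearMap.norm_trace_le_finrank_mul_norm {𝕜 E : Type*} [RCLike 𝕜]
    [NormedAddCommGroup E] [InnerProductSpace 𝕜 E] [FiniteDimensional 𝕜 E] (A : E →L[𝕜] E) :
    ‖LinearMap.trace 𝕜 E A.toLinearMap‖ ≤ Module.finrank 𝕜 E * ‖A‖ := by
  let b := stdOrthonormalBasis 𝕜 E
  calc ‖LinearMap.trace 𝕜 E A.toLinearMap‖ = ‖∑ i, inner 𝕜 (b i) (A (b i))‖ := by
        rw [LinearMap.trace_eq_sum_inner _ b]; rfl
    _ ≤ ∑ _i : Fin (Module.finrank 𝕜 E), ‖A‖ := by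
        refine (norm_sum_le _ _).trans (sum_le_sum fun i _ => ?_)
        simpa [b.orthonormal.1 i] using (norm_inner_le_norm (b i) (A (b i))).trans
          (mul_le_mul_of_nonneg_left (A.le_opNorm (b i)) (norm_nonneg _))
    _ = Module.finrank 𝕜 E * ‖A‖ := by simp

section InvPowExpansion

variable {E : Type*} [NormedAddCommGroup E] [NormedSpace ℂ E]

def HasInvPowExpansion (u a : ℕ → E) : Prop :=
  ∀ N : ℕ, (fun m : ℕ => u m - ∑ j ∈ range N, ((m : ℂ)⁻¹) ^ j • a j) =O[atTop]
    fun m : ℕ => ((m : ℝ)⁻¹) ^ N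

theorem eq_zero_of_isBigO_inv_pow_smul {v : E} {k : ℕ}
    (h : (fun m : ℕ => ((m : ℂ)⁻¹) ^ k • v) =O[atTop] fun m : ℕ => ((m : ℝ)⁻¹) ^ (k + 1)) :
    v = 0 := by
  obtain ⟨c, hc⟩ := h.bound
  have hle : ∀ᶠ m : ℕ in atTop, ‖v‖ ≤ c * (m : ℝ)⁻¹ := by
    filter_upwards [hc, eventually_gt_atTop 0] with m hm hm0
    have hpow : 0 < ((m : ℝ)⁻¹) ^ k := by positivity
    rw [norm_smul, norm_pow, norm_inv, Complex.norm_natCast, Real.norm_of_nonneg (by positivity),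
      pow_succ] at hm
    exact le_of_mul_le_mul_left (by linarith) hpow
  have hlim : Tendsto (fun m : ℕ => c * (m : ℝ)⁻¹) atTop (nhds 0) := by
    simpa using (tendsto_inv_atTop_zero.comp tendsto_natCast_atTop_atTop).const_mul c
  exact norm_le_zero_iff.1 (ge_of_tendsto hlim hle)

theorem HasInvPowExpansion.sub {u v a b : ℕ → E} (hu : HasInvPowExpansion u a)
    (hv : HasInvPowExpansion v b) : HasInvPowExpansion (u - v) (a - b) := fun N =>
  ((hu N).sub (hv N)).congr_left fun m => by
    simp only [Pi.sub_apply, smul_sub, sum_sub_distrib]; abel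

theorem HasInvPowExpansion.eq_zero {a : ℕ → E} (h : HasInvPowExpansion 0 a) : a = 0 := by
  funext k
  induction k using Nat.strong_induction_on with
  | _ k ih =>
    refine eq_zero_of_isBigO_inv_pow_smul (k := k) ((h (k + 1)).neg_left.congr_left fun m => ?_)
    rw [sum_range_succ,
      sum_eq_zero fun j hj => by rw [ih j (mem_range.1 hj), Pi.zero_apply, smul_zero]]
    simp

theorem HasInvPowExpansion.unique {u a b : ℕ → E} (ha : HasInvPowExpansion u a)
    (hb : HasInvPowExpansion u b) : a = b :=
  sub_eq_zero.1 (sub_self u ▸ ha.sub hb).eq_zero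

end InvPowExpansion

theorem HasInvPowExpansion.of_bound_mul_pow {u a : ℕ → ℂ} {n : ℕ}
    (h : ∀ N : ℕ, ∃ K : ℝ, 0 ≤ K ∧ ∀ m : ℕ, 1 ≤ m →
      ‖u m - (m : ℂ) ^ n * ∑ j ∈ range N, ((m : ℂ)⁻¹) ^ j * a j‖
        ≤ K * (m : ℝ) ^ n * ((m : ℝ)⁻¹) ^ N) :
    HasInvPowExpansion (fun m : ℕ => ((m : ℂ)⁻¹) ^ n * u m) a := by
  intro N
  obtain ⟨K, -, hK⟩ := h N
  refine IsBigO.of_bound K (eventually_atTop.2 ⟨1, fun m hm => ?_⟩)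
  have hm0 : (m : ℝ) ≠ 0 := by positivity
  have hfactor : ((m : ℂ)⁻¹) ^ n * u m - ∑ j ∈ range N, ((m : ℂ)⁻¹) ^ j • a j
      = ((m : ℂ)⁻¹) ^ n * (u m - (m : ℂ) ^ n * ∑ j ∈ range N, ((m : ℂ)⁻¹) ^ j * a j) := by
    rw [mul_sub, ← mul_assoc, ← mul_pow, inv_mul_cancel₀ (by exact_mod_cast hm0), one_pow,
      one_mul]
    rfl
  rw [hfactor, norm_mul, norm_pow, norm_inv, Complex.norm_natCast,
    Real.norm_of_nonneg (by positivity)]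
  calc ((m : ℝ)⁻¹) ^ n * ‖u m - (m : ℂ) ^ n * ∑ j ∈ range N, ((m : ℂ)⁻¹) ^ j * a j‖
      ≤ ((m : ℝ)⁻¹) ^ n * (K * (m : ℝ) ^ n * ((m : ℝ)⁻¹) ^ N) := by gcongr; exact hK m hm
    _ = K * ((m : ℝ)⁻¹) ^ N := by rw [inv_pow, inv_pow]; field_simp

section Trace

variable {E : ℕ → Type*} [∀ m, NormedAddCommGroup (E m)] [∀ m, InnerProductSpace ℂ (E m)]
  [∀ m, FiniteDimensional ℂ (E m)] {n : ℕ} {C' : ℝ}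

theorem isBigO_inv_pow_mul_trace
    (hdim : ∀ m : ℕ, 1 ≤ m → (Module.finrank ℂ (E m) : ℝ) ≤ C' * (m : ℝ) ^ n)
    (A : ∀ m, E m →L[ℂ] E m) :
    (fun m : ℕ => ((m : ℂ)⁻¹) ^ n * LinearMap.trace ℂ (E m) (A m).toLinearMap) =O[atTop]
      fun m => ‖A m‖ := by
  refine IsBigO.of_bound C' (eventually_atTop.2 ⟨1, fun m hm => ?_⟩)
  have hm0 : (m : ℝ) ≠ 0 := by positivity
  rw [norm_mul, norm_pow, norm_inv, Complex.norm_natCast, norm_norm]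
  calc ((m : ℝ)⁻¹) ^ n * ‖LinearMap.trace ℂ (E m) (A m).toLinearMap‖
      ≤ ((m : ℝ)⁻¹) ^ n * (C' * (m : ℝ) ^ n * ‖A m‖) := by
        gcongr
        exact (ContinuousLinearMap.norm_trace_le_finrank_mul_norm _).trans
          (by gcongr; exact hdim m hm)
    _ = C' * ‖A m‖ := by rw [inv_pow]; field_simp

theorem hasInvPowExpansion_trace_of_isBigO
    (hdim : ∀ m : ℕ, 1 ≤ m → (Module.finrank ℂ (E m) : ℝ) ≤ C' * (m : ℝ) ^ n)
    {P : ∀ m, E m →L[ℂ] E m} {Q : ℕ → ∀ m, E m →L[ℂ] E m} {c : ℕ → ℕ → ℂ}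
    (hP : ∀ N, (fun m : ℕ => ‖P m - ∑ j ∈ range N, ((m : ℂ)⁻¹) ^ j • Q j m‖) =O[atTop]
      fun m : ℕ => ((m : ℝ)⁻¹) ^ N)
    (hQ : ∀ j, HasInvPowExpansion
      (fun m : ℕ => ((m : ℂ)⁻¹) ^ n * LinearMap.trace ℂ (E m) (Q j m).toLinearMap) (c j)) :
    HasInvPowExpansion
      (fun m : ℕ => ((m : ℂ)⁻¹) ^ n * LinearMap.trace ℂ (E m) (P m).toLinearMap)
      fun k => ∑ l ∈ range (k + 1), c (k - l) l := by
  intro N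
  have hsplit : ∀ m : ℕ,
      ((m : ℂ)⁻¹) ^ n * LinearMap.trace ℂ (E m) (P m).toLinearMap
        - ∑ k ∈ range N, ((m : ℂ)⁻¹) ^ k • ∑ l ∈ range (k + 1), c (k - l) l
      = ((m : ℂ)⁻¹) ^ n * LinearMap.trace ℂ (E m)
          (P m - ∑ j ∈ range N, ((m : ℂ)⁻¹) ^ j • Q j m).toLinearMap
        + ∑ j ∈ range N, ((m : ℂ)⁻¹) ^ j *
          (((m : ℂ)⁻¹) ^ n * LinearMap.trace ℂ (E m) (Q j m).toLinearMap
            - ∑ l ∈ range (N - j), ((m : ℂ)⁻¹) ^ l • c j l) := by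
    intro m
    set x : ℂ := (m : ℂ)⁻¹
    have hreindex : ∑ j ∈ range N, x ^ j * ∑ l ∈ range (N - j), x ^ l * c j l
        = ∑ k ∈ range N, x ^ k * ∑ l ∈ range (k + 1), c (k - l) l := by
      simp_rw [mul_sum, ← mul_assoc, ← pow_add]
      rw [sum_range_diag_flip' (fun j l => x ^ (j + l) * c j l)]
      refine sum_congr rfl fun k _ => sum_congr rfl fun l hl => ?_
      rw [Nat.sub_add_cancel (Nat.le_of_lt_succ (mem_range.1 hl))]
    simp only [ContinuousLinearMap.toLinearMap_sub, ContinuousLinearMap.toLinearMap_sum,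
      ContinuousLinearMap.toLinearMap_smul, map_sub, map_sum, map_smul, smul_eq_mul]
    rw [← hreindex]
    simp only [mul_sub, mul_sum, sum_sub_distrib, mul_left_comm (x ^ n)]
    abel
  refine (((isBigO_inv_pow_mul_trace hdim _).trans (hP N)).add
    (IsBigO.fun_sum fun j hj => ?_)).congr_left fun m => (hsplit m).symm
  have hinv : (fun m : ℕ => ((m : ℂ)⁻¹) ^ j) =O[atTop] fun m : ℕ => ((m : ℝ)⁻¹) ^ j :=
    isBigO_of_le _ fun m => by simp
  refine (hinv.mul (hQ j (N - j))).congr_right fun m => ?_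
  rw [← pow_add, Nat.add_sub_cancel' (mem_range.1 hj).le]

end Trace

theorem IsAsymptoticExpansion.isBigO {Y : Type*} [TopologicalSpace Y] {E : ℕ → Type*}
    [∀ m, NormedAddCommGroup (E m)] [∀ m, InnerProductSpace ℂ (E m)]
    {T : ∀ m : ℕ, C(Y, ℂ) →ₗ[ℂ] (E m →L[ℂ] E m)} {C : ℕ → C(Y, ℂ) →ₗ[ℂ] C(Y, ℂ) →ₗ[ℂ] C(Y, ℂ)}
    (hC : IsAsymptoticExpansion T C) (f g : C(Y, ℂ)) (N : ℕ) :
    (fun m : ℕ => ‖T m f * T m g - ∑ j ∈ range N, ((m : ℂ)⁻¹) ^ j • T m (C j f g)‖) =O[atTop]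
      fun m : ℕ => ((m : ℝ)⁻¹) ^ N := by
  obtain ⟨K, -, hK⟩ := hC f g N
  refine IsBigO.of_bound K (eventually_atTop.2 ⟨1, fun m hm => ?_⟩)
  rw [norm_norm, Real.norm_of_nonneg (by positivity)]
  exact hK m hm

theorem formal_trace_is_cyclic_general
    [∀ m, FiniteDimensional ℂ (H m)]
    (T : ∀ m : ℕ, C(X, ℂ) →ₗ[ℂ] (H m →L[ℂ] H m))
    (C : ℕ → C(X, ℂ) →ₗ[ℂ] C(X, ℂ) →ₗ[ℂ] C(X, ℂ))
    (hC : IsAsymptoticExpansion T C)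
    (n : ℕ) (C' : ℝ)
    (hdim : ∀ m : ℕ, 1 ≤ m → (Module.finrank ℂ (H m) : ℝ) ≤ C' * (m : ℝ) ^ n)
    (τ : ℕ → C(X, ℂ) →ₗ[ℂ] ℂ)
    (htr : ∀ (a : C(X, ℂ)) (N : ℕ), ∃ K : ℝ, 0 ≤ K ∧ ∀ m : ℕ, 1 ≤ m →
      ‖LinearMap.trace ℂ (H m) (T m a).toLinearMap
          - (m : ℂ) ^ n * ∑ j ∈ Finset.range N, ((m : ℂ)⁻¹) ^ j * τ j a‖
        ≤ K * (m : ℝ) ^ n * ((m : ℝ)⁻¹) ^ N) :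
    ∀ (k : ℕ) (f g : C(X, ℂ)),
      ∑ l ∈ Finset.range (k + 1), τ l (C (k - l) f g)
        = ∑ l ∈ Finset.range (k + 1), τ l (C (k - l) g f) := by
  have hexp : ∀ f g : C(X, ℂ), HasInvPowExpansion
      (fun m : ℕ => ((m : ℂ)⁻¹) ^ n * LinearMap.trace ℂ (H m) (T m f * T m g).toLinearMap)
      fun k => ∑ l ∈ range (k + 1), τ l (C (k - l) f g) := fun f g =>
    hasInvPowExpansion_trace_of_isBigO (Q := fun j m => T m (C j f g))
      (c := fun j l => τ l (C j f g)) hdim (hC.isBigO f g) fun j =>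
        HasInvPowExpansion.of_bound_mul_pow (htr (C j f g))
  intro k f g
  have hcomm : ∀ m, LinearMap.trace ℂ (H m) (T m f * T m g).toLinearMap
      = LinearMap.trace ℂ (H m) (T m g * T m f).toLinearMap := fun m => by
    rw [ContinuousLinearMap.toLinearMap_mul, ContinuousLinearMap.toLinearMap_mul,
      LinearMap.trace_mul_comm]
  have hexp_gf := hexp g f
  simp only [← hcomm] at hexp_gf
  exact congrFun ((hexp f g).unique hexp_gf) k

theorem formal_trace_is_cyclic
    [∀ m, FiniteDimensional ℂ (H m)] [∀ m, Nontrivial (H m)]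
    (T : ∀ m : ℕ, C(X, ℂ) →ₗ[ℂ] (H m →L[ℂ] H m))
    (C : ℕ → C(X, ℂ) →ₗ[ℂ] C(X, ℂ) →ₗ[ℂ] C(X, ℂ))
    (hC : IsAsymptoticExpansion T C)
    (n : ℕ) (C' : ℝ) (hC' : 0 ≤ C')
    (hdim : ∀ m : ℕ, 1 ≤ m → (Module.finrank ℂ (H m) : ℝ) ≤ C' * (m : ℝ) ^ n)
    (τ : ℕ → C(X, ℂ) →ₗ[ℂ] ℂ)
    (htr : ∀ (a : C(X, ℂ)) (N : ℕ), ∃ K : ℝ, 0 ≤ K ∧ ∀ m : ℕ, 1 ≤ m →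
      ‖LinearMap.trace ℂ (H m) (T m a).toLinearMap
          - (m : ℂ) ^ n * ∑ j ∈ Finset.range N, ((m : ℂ)⁻¹) ^ j * τ j a‖
        ≤ K * (m : ℝ) ^ n * ((m : ℝ)⁻¹) ^ N) :
    ∀ (k : ℕ) (f g : C(X, ℂ)),
      ∑ l ∈ Finset.range (k + 1), τ l (C (k - l) f g)
        = ∑ l ∈ Finset.range (k + 1), τ l (C (k - l) g f) :=
  formal_trace_is_cyclic_general T C hC n C' hdim τ htr
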